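/- Termination of the value computation algorithm: let c ∈ ℕ, let the weighted system (N,R,wt,K) be c-closed, and consider the value computation recursion (V_n). Then the recursion stabilizes, i.e. there exists n₀ ∈ ℕ such that V_n(A) = V_{n₀}(A) for every n ≥ n₀ and every nonterminal A ∈ N. -/

import Mathlib

open scoped Classical

/-- Trees over a ranked set `R` with arity function `ar`:
`RT.node r ts` is a tree whose root is labelled `r` and which has `ar r` children. -/
inductive RT (R : Type) (ar : R → ℕ) : Type
  | node (r : R) (children : Fin (ar r) → RT R ar)

namespace RT

variable {R : Type} {ar : R → ℕ}

/-- The rule labelling the root of a tree. -/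
def rootRule : RT R ar → R
  | node r _ => r

/-- The subtree at a position (`none` if the position is not a position of the tree). -/
def subAt : RT R ar → List ℕ → Option (RT R ar)
  | t, [] => some t
  | node r ts, i :: p => if h : i < ar r then subAt (ts ⟨i, h⟩) p else none

/-- Replace the subtree at a position by another tree. -/
def replaceAt : RT R ar → List ℕ → RT R ar → RT R ar
  | _, [], s => s
  | node r ts, i :: p, s => node r fun j => if j.1 = i then replaceAt (ts j) p s else ts j

/-- The sequence of rule labels from the root to a position, inclusive. -/
def seqTo : RT R ar → List ℕ → Option (List R)
  | node r _, [] => some [r]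
  | node r ts, i :: p => if h : i < ar r then (seqTo (ts ⟨i, h⟩) p).map (fun l => r :: l) else none

/-- `p` is a leaf position of `d`, i.e. a valid position with no child positions. -/
def LeafAt (d : RT R ar) (p : List ℕ) : Prop :=
  ∃ t, subAt d p = some t ∧ ar t.rootRule = 0

/-- The height of a tree: `0` on nullary nodes, otherwise `1` plus the maximum height
of the direct subtrees. -/
def height : RT R ar → ℕ
  | node _ ts => Finset.univ.sup fun i => height (ts i) + 1

end RT

/-- The weight of a tree: evaluate it bottom-up, interpreting each rule `r` by the
operation `wt r`. -/
def wtval {K R : Type} {ar : R → ℕ} (wt : ∀ r : R, (Fin (ar r) → K) → K) : RT R ar → K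
  | .node r ts => wt r fun i => wtval wt (ts i)

section Cyclicity

variable {R : Type} {ar : R → ℕ}

/-- A string over `R` is an elementary cycle if it has length `> 1`, its first and last
symbols coincide, and it becomes repetition-free after deleting its last (resp. first)
symbol. -/
def ElementaryCycle (w : List R) : Prop :=
  1 < w.length ∧ w.head? = w.getLast? ∧ w.dropLast.Nodup ∧ w.tail.Nodup

/-- `ρ` is `(c,w)`-cyclic: `ρ = v₀ w v₁ ⋯ w v_c` (with `c` occurrences of the elementary
cycle `w`) where `w` is not an infix of any `vᵢ`. -/
def CWCyclic (c : ℕ) (w ρ : List R) : Prop :=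
  ElementaryCycle w ∧
  ∃ v : ℕ → List R,
    ρ = v 0 ++ (((List.range c).map fun i => w ++ v (i + 1)).flatten) ∧
    ∀ i ≤ c, ¬ w <:+: v i

/-- `ρ` is `c`-cyclic: it is `(c,w)`-cyclic for some elementary cycle `w` and not
`(c',w')`-cyclic for any `c' > c` and elementary cycle `w'`. -/
def CCyclic (c : ℕ) (ρ : List R) : Prop :=
  (∃ w, CWCyclic c w ρ) ∧ ∀ c', c < c' → ∀ w', ¬ CWCyclic c' w' ρ

/-- The leaf position `p` of `d` is `(c,w)`-cyclic. -/
def LeafCW (c : ℕ) (w : List R) (d : RT R ar) (p : List ℕ) : Prop :=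
  RT.LeafAt d p ∧ ∃ ρ, RT.seqTo d p = some ρ ∧ CWCyclic c w ρ

/-- The leaf position `p` of `d` is `c`-cyclic. -/
def LeafC (c : ℕ) (d : RT R ar) (p : List ℕ) : Prop :=
  RT.LeafAt d p ∧ ∃ ρ, RT.seqTo d p = some ρ ∧ CCyclic c ρ

/-- The tree `d` is `c`-cyclic: some leaf of `d` is `c`-cyclic and no leaf of `d` is
`c'`-cyclic for any `c' > c`. -/
def TreeC (c : ℕ) (d : RT R ar) : Prop :=
  (∃ p, LeafC c d p) ∧ ∀ c', c < c' → ∀ p, ¬ LeafC c' d p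

/-- `d ⊢_w d'` : there are positions `p ≤ p'` of `d` whose connecting label sequence is
`w`, and `d'` is obtained by replacing the subtree at `p` by the subtree at `p'`.
(The position `p'` is `p ++ q`.) -/
def CutW (w : List R) (d d' : RT R ar) : Prop :=
  ∃ p q t s, RT.subAt d p = some t ∧ RT.subAt t q = some s ∧
    RT.seqTo t q = some w ∧ d' = RT.replaceAt d p s

/-- `d ⊢ d'` : `d ⊢_w d'` for some elementary cycle `w`. -/
def Cut (d d' : RT R ar) : Prop := ∃ w, ElementaryCycle w ∧ CutW w d d'

/-- The set of `w`-cutout trees of `d`. -/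
def cotreesW (w : List R) (d : RT R ar) : Set (RT R ar) := {d' | Relation.TransGen (CutW w) d d'}

/-- The set of cutout trees of `d`. -/
def cotrees (d : RT R ar) : Set (RT R ar) := {d' | Relation.TransGen Cut d d'}

end Cyclicity

section Rules

variable {N R : Type}

/-- Well-sorted trees over a rule system given by `lhs` and `rhs`: at each node labelled
`r`, the `i`-th child is a well-sorted tree whose root label has left-hand side equal to
the `i`-th nonterminal of `rhs r`. -/
inductive WellSorted (lhs : R → N) (rhs : R → List N) :
    RT R (fun r => (rhs r).length) → Prop
  | node (r : R) (ts : Fin (rhs r).length → RT R fun r => (rhs r).length)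
      (hsort : ∀ i, lhs (ts i).rootRule = (rhs r).get i)
      (hrec : ∀ i, WellSorted lhs rhs (ts i)) : WellSorted lhs rhs (RT.node r ts)

/-- `T_R` : the set of (well-sorted) trees over the rule system. -/
def TRset (lhs : R → N) (rhs : R → List N) : Set (RT R fun r => (rhs r).length) :=
  {d | WellSorted lhs rhs d}

/-- `(T_R)_A` : the set of trees of sort `A`. -/
def TRA (lhs : R → N) (rhs : R → List N) (A : N) : Set (RT R fun r => (rhs r).length) :=
  {d | WellSorted lhs rhs d ∧ lhs d.rootRule = A}

/-- `T_R^{(c)}` : the set of trees that are `c'`-cyclic for some `c' ≤ c`. -/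
def TRcset (lhs : R → N) (rhs : R → List N) (c : ℕ) : Set (RT R fun r => (rhs r).length) :=
  {d | WellSorted lhs rhs d ∧ ∃ c' ≤ c, TreeC c' d}

end Rules

/-- An infinitary sum operation on a commutative monoid `K`, turning it into a complete
monoid: the sum of the empty family is `0`, the sum of a singleton family is its member,
the sum of a two-element family is the binary sum, and the partition law holds (every
partition of a countable index set `I` into sets indexed by `J` is given by the fibers
of a map `g : I → J`). -/
structure InfSum (K : Type) [AddCommMonoid K] where
  isum : ∀ {I : Type} [Countable I], (I → K) → K
  isum_empty : ∀ {I : Type} [Countable I] (f : I → K), IsEmpty I → isum f = 0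
  isum_single : ∀ {I : Type} [Countable I] (f : I → K) (j : I), (∀ i, i = j) → isum f = f j
  isum_pair : ∀ {I : Type} [Countable I] (f : I → K) (j j' : I), j ≠ j' →
    (∀ i, i = j ∨ i = j') → isum f = f j + f j'
  isum_partition : ∀ {I J : Type} [Countable I] [Countable J] (f : I → K) (g : I → J),
    isum f = isum fun j : J => isum fun i : {i : I // g i = j} => f i.1

section MMonoid

variable {K : Type} [AddCommMonoid K]

/-- A complete monoid is d-complete if, whenever all the partial sums `Σ_{i ≤ n} f i`
eventually equal `k`, the infinitary sum of the family equals `k`. -/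
def InfSum.DComplete (S : InfSum K) : Prop :=
  ∀ (k : K) (f : ℕ → K),
    (∃ n₀ : ℕ, ∀ n, n₀ ≤ n → (∑ i ∈ Finset.range (n + 1), f i) = k) → S.isum f = k

/-- A complete monoid is completely idempotent if the infinitary sum of every constant
family over a nonempty countable index set is that constant. -/
def InfSum.CompletelyIdempotent (S : InfSum K) : Prop :=
  ∀ (I : Type) [Countable I], Nonempty I → ∀ k : K, S.isum (fun _ : I => k) = k

/-- The family `Ω` of operation sets contains all the null (constantly `0`) operations. -/
def HasZeroOps (Ω : ∀ n : ℕ, Set ((Fin n → K) → K)) : Prop :=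
  ∀ n : ℕ, (fun _ : Fin n → K => (0 : K)) ∈ Ω n

/-- Distributivity of an M-monoid: every operation in `Ω` distributes over `+` in each
argument, and `0` is absorbing for every operation in `Ω`. -/
def DistributiveOps (Ω : ∀ n : ℕ, Set ((Fin n → K) → K)) : Prop :=
  ∀ n : ℕ, ∀ ω ∈ Ω n,
    (∀ (x : Fin n → K) (i : Fin n) (a b : K),
      ω (Function.update x i (a + b)) = ω (Function.update x i a) + ω (Function.update x i b)) ∧
    (∀ x : Fin n → K, (∃ i, x i = 0) → ω x = 0)

end MMonoid

/-- The weighted system `(N, R, wt, K)` is `c`-closed: for every well-sorted tree `d` and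
elementary cycle `w` such that some leaf position of `d` is `(c+1,w)`-cyclic, the weight
of `d` is subsumed by the (finite) `⊕`-sum of the weights of the `w`-cutout trees of `d`. -/
def CClosed {K : Type} [AddCommMonoid K] {N R : Type} (lhs : R → N) (rhs : R → List N)
    (wt : ∀ r : R, (Fin (rhs r).length → K) → K) (c : ℕ) : Prop :=
  ∀ d : RT R (fun r => (rhs r).length), WellSorted lhs rhs d →
    ∀ w : List R, ElementaryCycle w → (∃ p, LeafCW (c + 1) w d p) →
      (wtval wt d + ∑ᶠ d' ∈ cotreesW w d, wtval wt d') = ∑ᶠ d' ∈ cotreesW w d, wtval wt d'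

section ValueComputation

variable {K : Type} [AddCommMonoid K] {N R : Type} [Fintype N] [Nonempty N] [Fintype R]

/-- `select e n` : the nonterminal treated in the `n`-th iteration of the inner for loop,
given an enumeration `e` of the nonterminals. -/
def select (e : Fin (Fintype.card N) → N) (n : ℕ) : N :=
  e ⟨n % Fintype.card N, Nat.mod_lt _ Fintype.card_pos⟩

/-- The value computation recursion `V_n : N → K`. -/
noncomputable def Vrec (lhs : R → N) (rhs : R → List N)
    (wt : ∀ r : R, (Fin (rhs r).length → K) → K)
    (e : Fin (Fintype.card N) → N) : ℕ → N → K
  | 0, _ => 0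
  | n + 1, A =>
      if select e n = A then
        ∑ᶠ r ∈ {r : R | lhs r = A}, wt r fun i => Vrec lhs rhs wt e n ((rhs r).get i)
      else Vrec lhs rhs wt e n A

/-- The derivation-set recursion `𝒱_n : N → P(T_R)`. -/
noncomputable def Mrec (lhs : R → N) (rhs : R → List N) (e : Fin (Fintype.card N) → N) :
    ℕ → N → Set (RT R fun r => (rhs r).length)
  | 0, _ => ∅
  | n + 1, A =>
      if select e n = A then
        {d | ∃ (r : R) (_ : lhs r = A) (ts : Fin (rhs r).length → RT R fun r => (rhs r).length),
          d = RT.node r ts ∧ ∀ i, ts i ∈ Mrec lhs rhs e n ((rhs r).get i)}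
      else Mrec lhs rhs e n A

end ValueComputation

/-!
By distributivity, `V_n(A)` is the total weight of the derivation set `Mrec n A`, which after
`|N| · h` steps contains every tree of sort `A` and height `< h`. A tree of height at least
`cycleBound R c` has a leaf path so long that, by pigeonhole, some elementary cycle `w` occurs
`c + 1` times on a suffix of it: some subtree has a `(c + 1, w)`-cyclic leaf. By `c`-closedness
the weight of that subtree is absorbed by its `w`-cutout trees, and cutting preserves membership in
the derivation sets while decreasing the number of nodes. Removing the tall trees in order of
decreasing size thus leaves the sum unchanged, so from step `|N| · cycleBound R c` on, `V_n(A)` is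
the total weight of the trees of sort `A` below that height.
-/

namespace RT

variable {R : Type} {ar : R → ℕ}

def numNodes : RT R ar → ℕ
  | node _ ts => 1 + ∑ i, numNodes (ts i)

@[simp] lemma subAt_nil (d : RT R ar) : subAt d [] = some d := by cases d; rfl

lemma subAt_cons (r : R) (ts : Fin (ar r) → RT R ar) (i : ℕ) (p : List ℕ) :
    subAt (node r ts) (i :: p) = if h : i < ar r then subAt (ts ⟨i, h⟩) p else none := rfl

lemma subAt_node_cons_eq_some {r : R} {ts : Fin (ar r) → RT R ar} {i : ℕ} {p : List ℕ}
    {t : RT R ar} (h : subAt (node r ts) (i :: p) = some t) :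
    ∃ hi : i < ar r, subAt (ts ⟨i, hi⟩) p = some t := by
  rw [subAt_cons] at h
  split_ifs at h with hi
  exact ⟨hi, h⟩

@[simp] lemma replaceAt_nil (d s : RT R ar) : replaceAt d [] s = s := by cases d; rfl

lemma replaceAt_cons_of_lt {r : R} (ts : Fin (ar r) → RT R ar) {i : ℕ} (hi : i < ar r)
    (p : List ℕ) (s : RT R ar) :
    replaceAt (node r ts) (i :: p) s =
      node r (Function.update ts ⟨i, hi⟩ (replaceAt (ts ⟨i, hi⟩) p s)) := by
  rw [replaceAt]
  congr 1
  funext j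
  by_cases hj : j = ⟨i, hi⟩
  · subst hj; simp
  · rw [Function.update_of_ne hj, if_neg fun h => hj (Fin.ext h)]

lemma subAt_append (d : RT R ar) (p q : List ℕ) :
    subAt d (p ++ q) = (subAt d p).bind fun t => subAt t q := by
  induction p generalizing d with
  | nil => simp
  | cons i p ih =>
    cases d with
    | node r ts =>
      by_cases hi : i < ar r
      · simp [subAt_cons, hi, ih]
      · simp [subAt_cons, hi]

lemma replaceAt_self {d t : RT R ar} {p : List ℕ} (h : subAt d p = some t) :
    replaceAt d p t = d := by
  induction p generalizing d with
  | nil => simpa using h.symm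
  | cons i p ih =>
    cases d with
    | node r ts =>
      obtain ⟨hi, h⟩ := subAt_node_cons_eq_some h
      rw [replaceAt_cons_of_lt ts hi, ih h, Function.update_eq_self]

lemma subAt_replaceAt {d t : RT R ar} {p : List ℕ} (h : subAt d p = some t) (s : RT R ar) :
    subAt (replaceAt d p s) p = some s := by
  induction p generalizing d with
  | nil => simp
  | cons i p ih =>
    cases d with
    | node r ts =>
      obtain ⟨hi, h⟩ := subAt_node_cons_eq_some h
      rw [replaceAt_cons_of_lt ts hi, subAt_cons, dif_pos hi, Function.update_self, ih h]

lemma replaceAt_injective {d t : RT R ar} {p : List ℕ} (h : subAt d p = some t) :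
    Function.Injective (replaceAt d p) := fun x y hxy =>
  Option.some_injective _ <| by rw [← subAt_replaceAt h x, hxy, subAt_replaceAt h y]

lemma numNodes_lt_numNodes_node (r : R) (ts : Fin (ar r) → RT R ar) (i : Fin (ar r)) :
    numNodes (ts i) < numNodes (node r ts) := by
  have := Finset.single_le_sum (fun j _ => Nat.zero_le (numNodes (ts j))) (Finset.mem_univ i)
  simp only [numNodes]
  omega

lemma numNodes_subAt_le {d t : RT R ar} {p : List ℕ} (h : subAt d p = some t) :
    numNodes t ≤ numNodes d := by
  induction p generalizing d with
  | nil => simp_all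
  | cons i p ih =>
    cases d with
    | node r ts =>
      obtain ⟨hi, h⟩ := subAt_node_cons_eq_some h
      exact (ih h).trans (numNodes_lt_numNodes_node r ts _).le

lemma numNodes_subAt_lt {d t : RT R ar} {p : List ℕ} (h : subAt d p = some t) (hp : p ≠ []) :
    numNodes t < numNodes d := by
  obtain ⟨i, p, rfl⟩ := List.exists_cons_of_ne_nil hp
  cases d with
  | node r ts =>
    obtain ⟨hi, h⟩ := subAt_node_cons_eq_some h
    exact (numNodes_subAt_le h).trans_lt (numNodes_lt_numNodes_node r ts _)

lemma numNodes_replaceAt_lt {d t s : RT R ar} {p : List ℕ} (h : subAt d p = some t)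
    (hs : numNodes s < numNodes t) : numNodes (replaceAt d p s) < numNodes d := by
  induction p generalizing d with
  | nil => simp_all
  | cons i p ih =>
    cases d with
    | node r ts =>
      obtain ⟨hi, h⟩ := subAt_node_cons_eq_some h
      rw [replaceAt_cons_of_lt ts hi]
      simp only [numNodes, add_lt_add_iff_left]
      refine Finset.sum_lt_sum (fun j _ => ?_)
        ⟨⟨i, hi⟩, Finset.mem_univ _, by simpa using ih h⟩
      rcases eq_or_ne j ⟨i, hi⟩ with rfl | hj
      · simpa using (ih h).le
      · rw [Function.update_of_ne hj]

lemma height_lt_height_node {r : R} (ts : Fin (ar r) → RT R ar) (i : Fin (ar r)) :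
    height (ts i) < height (node r ts) :=
  Finset.le_sup (f := fun i => height (ts i) + 1) (Finset.mem_univ i)

lemma height_lt_numNodes (d : RT R ar) : height d < numNodes d := by
  induction d with
  | node r ts ih =>
    have : height (node r ts) ≤ ∑ i, numNodes (ts i) :=
      Finset.sup_le fun i _ => (ih i).trans_le <|
        Finset.single_le_sum (fun j _ => Nat.zero_le (numNodes (ts j))) (Finset.mem_univ i)
    simp only [numNodes]
    omega

lemma finite_setOf_height_lt [Finite R] (n : ℕ) : {d : RT R ar | height d < n}.Finite := by
  induction n with
  | zero => simp
  | succ n ih =>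
    have : Finite {d : RT R ar // height d < n} := ih
    refine (Set.finite_range fun x : Σ r, Fin (ar r) → {d : RT R ar // height d < n} =>
      node x.1 fun i => (x.2 i).1).subset ?_
    rintro ⟨r, ts⟩ hd
    refine ⟨⟨r, fun i => ⟨ts i, ?_⟩⟩, rfl⟩
    have := height_lt_height_node ts i
    simp only [Set.mem_ofPred_eq] at hd
    omega

lemma finite_setOf_numNodes_le [Finite R] (n : ℕ) : {d : RT R ar | numNodes d ≤ n}.Finite :=
  (finite_setOf_height_lt (n + 1)).subset fun d hd => by
    have := height_lt_numNodes d
    simp only [Set.mem_ofPred_eq] at hd ⊢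
    omega

lemma seqTo_cons_of_lt {r : R} (ts : Fin (ar r) → RT R ar) {i : ℕ} (hi : i < ar r)
    (p : List ℕ) : seqTo (node r ts) (i :: p) = (seqTo (ts ⟨i, hi⟩) p).map (r :: ·) := by
  rw [seqTo, dif_pos hi]

lemma seqTo_length {d : RT R ar} {p : List ℕ} {ρ : List R} (h : seqTo d p = some ρ) :
    ρ.length = p.length + 1 := by
  induction p generalizing d ρ with
  | nil => cases d; cases h; rfl
  | cons i p ih =>
    cases d with
    | node r ts =>
      by_cases hi : i < ar r
      · rw [seqTo_cons_of_lt ts hi, Option.map_eq_some_iff] at h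
        obtain ⟨l, hl, rfl⟩ := h
        simp [ih hl]
      · simp [seqTo, hi] at h

lemma exists_seqTo_of_subAt {d t : RT R ar} {p : List ℕ} (h : subAt d p = some t) :
    ∃ ρ, seqTo d p = some ρ := by
  induction p generalizing d with
  | nil => cases d; exact ⟨_, rfl⟩
  | cons i p ih =>
    cases d with
    | node r ts =>
      obtain ⟨hi, h⟩ := subAt_node_cons_eq_some h
      obtain ⟨ρ, hρ⟩ := ih h
      exact ⟨r :: ρ, by simp [seqTo_cons_of_lt ts hi, hρ]⟩

lemma seqTo_head? {d : RT R ar} {p : List ℕ} {ρ : List R} (h : seqTo d p = some ρ) :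
    ρ.head? = some d.rootRule := by
  cases d with
  | node r ts =>
    cases p with
    | nil => cases h; rfl
    | cons i p =>
      by_cases hi : i < ar r
      · rw [seqTo_cons_of_lt ts hi, Option.map_eq_some_iff] at h
        obtain ⟨l, -, rfl⟩ := h
        rfl
      · simp [seqTo, hi] at h

lemma seqTo_getLast? {d t : RT R ar} {p : List ℕ} {ρ : List R} (hsub : subAt d p = some t)
    (h : seqTo d p = some ρ) : ρ.getLast? = some t.rootRule := by
  induction p generalizing d ρ with
  | nil => cases d; cases h; cases hsub; rfl
  | cons i p ih =>
    cases d with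
    | node r ts =>
      obtain ⟨hi, hsub⟩ := subAt_node_cons_eq_some hsub
      rw [seqTo_cons_of_lt ts hi, Option.map_eq_some_iff] at h
      obtain ⟨l, hl, rfl⟩ := h
      obtain ⟨x, l, rfl⟩ := List.exists_cons_of_length_eq_add_one (seqTo_length hl)
      rw [List.getLast?_cons_cons, ih hsub hl]

lemma seqTo_append {d t : RT R ar} {p q : List ℕ} {ρ : List R} (hsub : subAt d p = some t)
    (h : seqTo d (p ++ q) = some ρ) : seqTo t q = some (ρ.drop p.length) := by
  induction p generalizing d ρ with
  | nil => simp_all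
  | cons i p ih =>
    cases d with
    | node r ts =>
      obtain ⟨hi, hsub⟩ := subAt_node_cons_eq_some hsub
      rw [List.cons_append, seqTo_cons_of_lt ts hi, Option.map_eq_some_iff] at h
      obtain ⟨l, hl, rfl⟩ := h
      simpa using ih hsub hl

lemma exists_leafAt_length_eq_height (d : RT R ar) : ∃ p, LeafAt d p ∧ p.length = height d := by
  induction d with
  | node r ts ih =>
    by_cases h0 : ar r = 0
    · refine ⟨[], ⟨_, rfl, h0⟩, ?_⟩
      simp [height, Finset.univ_eq_empty_iff.mpr (h0 ▸ inferInstance : IsEmpty (Fin (ar r)))]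
    · obtain ⟨i, -, hi⟩ := Finset.exists_mem_eq_sup Finset.univ
        (Finset.univ_nonempty_iff.mpr ⟨⟨0, Nat.pos_of_ne_zero h0⟩⟩)
        fun i => height (ts i) + 1
      obtain ⟨p, ⟨t, hsub, hleaf⟩, hlen⟩ := ih i
      refine ⟨i.1 :: p, ⟨t, by simpa [subAt_cons] using hsub, hleaf⟩, ?_⟩
      rw [height, hi, List.length_cons, hlen]

end RT

section Words

variable {R : Type}

lemma exists_elementaryCycle_infix_of_not_nodup {u : List R} (hu : ¬ u.Nodup) :
    ∃ v, ElementaryCycle v ∧ v <:+: u := by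
  cases u with
  | nil => exact absurd List.nodup_nil hu
  | cons x t =>
    by_cases ht : t.Nodup
    · by_cases hd : (x :: t).dropLast.Nodup
      · -- neither end can be dropped, so the repeated symbol is both the first and the last
        have hxt : x ∈ t := by simpa [ht] using hu
        have hne : t ≠ [] := List.ne_nil_of_mem hxt
        have hlast : x = t.getLast hne := by
          rw [List.dropLast_cons_of_ne_nil hne, List.nodup_cons] at hd
          rw [← List.dropLast_append_getLast hne, List.mem_append] at hxt
          simpa [hd.1] using hxt
        refine ⟨x :: t, ⟨?_, ?_, hd, ht⟩, List.infix_rfl⟩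
        · simpa [List.length_pos_iff] using hne
        · rw [List.getLast?_eq_some_getLast (List.cons_ne_nil x t), List.getLast_cons hne,
            ← hlast]
          rfl
      · obtain ⟨v, hv, hvu⟩ := exists_elementaryCycle_infix_of_not_nodup hd
        exact ⟨v, hv, hvu.trans (List.dropLast_prefix _).isInfix⟩
    · obtain ⟨v, hv, hvu⟩ := exists_elementaryCycle_infix_of_not_nodup ht
      exact ⟨v, hv, hvu.trans (List.suffix_cons x t).isInfix⟩
termination_by u.length
decreasing_by all_goals subst_vars; simp

lemma ElementaryCycle.ne_nil {w : List R} (hw : ElementaryCycle w) : w ≠ [] :=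
  List.ne_nil_of_length_pos (by have := hw.1; omega)

lemma ElementaryCycle.length_le [Fintype R] {w : List R} (hw : ElementaryCycle w) :
    w.length ≤ Fintype.card R + 1 := by
  have := hw.2.2.1.length_le_card
  rw [List.length_dropLast] at this
  omega

lemma finite_setOf_elementaryCycle [Fintype R] : {w : List R | ElementaryCycle w}.Finite :=
  (List.finite_length_le R (Fintype.card R + 1)).subset fun _ hw => hw.length_le

noncomputable def elementaryCycles (R : Type) [Fintype R] : Finset (List R) :=
  finite_setOf_elementaryCycle.toFinset

lemma mem_elementaryCycles [Fintype R] {w : List R} :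
    w ∈ elementaryCycles R ↔ ElementaryCycle w :=
  Set.Finite.mem_toFinset _

def HasDisjointInfixes (w : List R) : ℕ → List R → Prop
  | 0, _ => True
  | m + 1, σ => ∃ α β, σ = α ++ w ++ β ∧ HasDisjointInfixes w m β

namespace HasDisjointInfixes

variable {w : List R}

lemma append_left {m : ℕ} {β : List R} (h : HasDisjointInfixes w m β) (α : List R) :
    HasDisjointInfixes w m (α ++ β) := by
  cases m with
  | zero => trivial
  | succ m =>
    obtain ⟨α', β', rfl, h⟩ := h
    exact ⟨α ++ α', β', by simp, h⟩

lemma of_succ :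
    ∀ {m : ℕ} {σ : List R}, HasDisjointInfixes w (m + 1) σ → HasDisjointInfixes w m σ
  | 0, _, _ => trivial
  | _ + 1, _, ⟨α, β, hσ, h⟩ => ⟨α, β, hσ, of_succ h⟩

lemma of_le {m m' : ℕ} (hm : m' ≤ m) {σ : List R} (h : HasDisjointInfixes w m σ) :
    HasDisjointInfixes w m' σ := by
  induction m, hm using Nat.le_induction with
  | base => exact h
  | succ m _ ih => exact ih h.of_succ

lemma ne_nil (hw : w ≠ []) {m : ℕ} {σ : List R} (h : HasDisjointInfixes w (m + 1) σ) :
    σ ≠ [] := by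
  obtain ⟨α, β, rfl, -⟩ := h
  simp [hw]

lemma tail (hw : w ≠ []) {m : ℕ} {σ : List R} (h : HasDisjointInfixes w (m + 1) σ) :
    HasDisjointInfixes w m σ.tail := by
  obtain ⟨α, β, rfl, h⟩ := h
  cases α with
  | nil =>
    obtain ⟨x, w, rfl⟩ := List.exists_cons_of_ne_nil hw
    simpa using h.append_left w
  | cons x α => exact of_succ ⟨α, β, rfl, h⟩

lemma exists_leftmost (hw : w ≠ []) {m : ℕ} {σ : List R}
    (h : HasDisjointInfixes w (m + 1) σ) :
    ∃ α β, σ = α ++ w ++ β ∧ HasDisjointInfixes w m β ∧ ¬ w <:+: α := by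
  have hex :
      ∃ k, ∃ α β, α.length = k ∧ σ = α ++ w ++ β ∧ HasDisjointInfixes w m β := by
    obtain ⟨α, β, hσ, h⟩ := h
    exact ⟨_, α, β, rfl, hσ, h⟩
  obtain ⟨α, β, hlen, hσ, hβ⟩ := Nat.find_spec hex
  refine ⟨α, β, hσ, hβ, ?_⟩
  rintro ⟨s, t, rfl⟩
  have : Nat.find hex ≤ s.length :=
    Nat.find_min' hex
      ⟨s, t ++ w ++ β, rfl, by simp [hσ], by simpa using hβ.append_left (t ++ w)⟩
  have : 0 < w.length := List.length_pos_iff.mpr hw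
  simp only [List.length_append] at hlen
  omega

lemma exists_drop_not_succ (hw : w ≠ []) {m : ℕ} {ρ : List R} (h : HasDisjointInfixes w m ρ) :
    ∃ j, HasDisjointInfixes w m (ρ.drop j) ∧ ¬ HasDisjointInfixes w (m + 1) (ρ.drop j) := by
  set P := fun j => HasDisjointInfixes w m (ρ.drop j)
  refine ⟨Nat.findGreatest P ρ.length,
    Nat.findGreatest_spec (P := P) (Nat.zero_le _) (by simpa [P] using h), fun hsucc => ?_⟩
  have hlt : Nat.findGreatest P ρ.length < ρ.length := by simpa using hsucc.ne_nil hw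
  have := Nat.le_findGreatest hlt (P := P) (by simpa [P, List.tail_drop] using hsucc.tail hw)
  omega

end HasDisjointInfixes

lemma exists_hasDisjointInfixes_sum_ge [Fintype R] (M : ℕ) {ρ : List R}
    (h : M * (Fintype.card R + 1) ≤ ρ.length) :
    ∃ n : List R → ℕ, M ≤ ∑ w ∈ elementaryCycles R, n w ∧
      ∀ w, HasDisjointInfixes w (n w) ρ := by
  induction M generalizing ρ with
  | zero => exact ⟨0, Nat.zero_le _, fun _ => trivial⟩
  | succ M ih =>
    set L := Fintype.card R + 1
    rw [Nat.succ_mul] at h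
    obtain ⟨n, hn, hρ⟩ := ih (ρ := ρ.drop L) (by rw [List.length_drop]; omega)
    have hnd : ¬ (ρ.take L).Nodup := fun hnd => by
      have := hnd.length_le_card
      rw [List.length_take] at this
      omega
    obtain ⟨w₀, hw₀, α, β, hαβ⟩ := exists_elementaryCycle_infix_of_not_nodup hnd
    refine ⟨fun w => n w + if w = w₀ then 1 else 0, ?_, fun w => ?_⟩
    · rw [Finset.sum_add_distrib, Finset.sum_ite_eq', if_pos (mem_elementaryCycles.mpr hw₀)]
      omega
    · rw [← List.take_append_drop L ρ, ← hαβ]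
      by_cases hw : w = w₀
      · subst hw
        dsimp only
        rw [if_pos rfl]
        exact ⟨α, β ++ ρ.drop L, by simp, (hρ w).append_left β⟩
      · simpa [hw] using (hρ w).append_left (α ++ w₀ ++ β)

lemma cwCyclic_of_hasDisjointInfixes {w : List R} (hw : ElementaryCycle w) :
    ∀ {m : ℕ} {σ : List R},
      HasDisjointInfixes w m σ → ¬ HasDisjointInfixes w (m + 1) σ → CWCyclic m w σ
  | 0, σ, _, hmax =>
    ⟨hw, fun _ => σ, by simp, fun _ _ ⟨s, t, hst⟩ => hmax ⟨s, t, hst.symm, trivial⟩⟩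
  | m + 1, _, h, hmax => by
    obtain ⟨α, β, rfl, hβ, hα⟩ := h.exists_leftmost hw.ne_nil
    obtain ⟨-, v, rfl, hv⟩ :=
      cwCyclic_of_hasDisjointInfixes hw hβ fun hβ' => hmax ⟨α, _, rfl, hβ'⟩
    refine ⟨hw, fun | 0 => α | i + 1 => v i, ?_,
      fun | 0, _ => hα | i + 1, hi => hv i (by omega)⟩
    simp [List.range_succ_eq_map, Function.comp_def]

/-- A sequence of this length splits into `c · |W| + 1` blocks of length `|R| + 1`, where `W` is
the set of elementary cycles; every block contains some `w ∈ W`, so by pigeonhole some `w`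
occurs in `c + 1` disjoint blocks. -/
noncomputable def cycleBound (R : Type) [Fintype R] (c : ℕ) : ℕ :=
  (c * (elementaryCycles R).card + 1) * (Fintype.card R + 1)

lemma exists_cwCyclic_drop [Fintype R] (c : ℕ) {ρ : List R}
    (hρ : cycleBound R c ≤ ρ.length) :
    ∃ w j, j < ρ.length ∧ CWCyclic (c + 1) w (ρ.drop j) := by
  obtain ⟨n, hn, hρ⟩ := exists_hasDisjointInfixes_sum_ge _ hρ
  obtain ⟨w, hwW, hw⟩ : ∃ w ∈ elementaryCycles R, c < n w := by
    refine Finset.exists_lt_of_sum_lt (lt_of_lt_of_le ?_ hn)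
    simp [mul_comm]
  have hwc := mem_elementaryCycles.mp hwW
  obtain ⟨j, hj, hjmax⟩ := ((hρ w).of_le hw).exists_drop_not_succ hwc.ne_nil
  refine ⟨w, j, ?_, cwCyclic_of_hasDisjointInfixes hwc hj hjmax⟩
  simpa using hj.ne_nil hwc.ne_nil

end Words

section Derivations

variable {N R : Type} {lhs : R → N} {rhs : R → List N}

def nodeSet (lhs : R → N) (rhs : R → List N) (F : N → Set (RT R fun r => (rhs r).length))
    (A : N) : Set (RT R fun r => (rhs r).length) :=
  {d | ∃ (r : R) (_ : lhs r = A) (ts : Fin (rhs r).length → RT R fun r => (rhs r).length),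
    d = RT.node r ts ∧ ∀ i, ts i ∈ F ((rhs r).get i)}

lemma nodeSet_mono {F G : N → Set (RT R fun r => (rhs r).length)} (h : F ≤ G) :
    nodeSet lhs rhs F ≤ nodeSet lhs rhs G := by
  rintro A _ ⟨r, hr, ts, rfl, hts⟩
  exact ⟨r, hr, ts, rfl, fun i => h _ (hts i)⟩

variable [Fintype N] [Nonempty N] {e : Fin (Fintype.card N) → N}

lemma mrec_succ (n : ℕ) (A : N) : Mrec lhs rhs e (n + 1) A =
    if select e n = A then nodeSet lhs rhs (Mrec lhs rhs e n) A else Mrec lhs rhs e n A :=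
  rfl

lemma mrec_le_nodeSet_and_le_succ (n : ℕ) :
    Mrec lhs rhs e n ≤ nodeSet lhs rhs (Mrec lhs rhs e n) ∧
      Mrec lhs rhs e n ≤ Mrec lhs rhs e (n + 1) := by
  induction n with
  | zero => exact ⟨fun _ => Set.empty_subset _, fun _ => Set.empty_subset _⟩
  | succ n ih =>
    have hnode : Mrec lhs rhs e (n + 1) ≤ nodeSet lhs rhs (Mrec lhs rhs e (n + 1)) := by
      intro A
      rw [mrec_succ]
      split_ifs
      · exact nodeSet_mono ih.2 A
      · exact (ih.1 A).trans (nodeSet_mono ih.2 A)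
    refine ⟨hnode, fun A => ?_⟩
    rw [mrec_succ (n + 1)]
    split_ifs
    · exact hnode A
    · exact subset_rfl

lemma mrec_le_nodeSet (n : ℕ) : Mrec lhs rhs e n ≤ nodeSet lhs rhs (Mrec lhs rhs e n) :=
  (mrec_le_nodeSet_and_le_succ n).1

lemma monotone_mrec : Monotone (Mrec lhs rhs e) :=
  monotone_nat_of_le_succ fun n => (mrec_le_nodeSet_and_le_succ n).2

lemma lhs_rootRule_of_mem_mrec {n : ℕ} {A : N} {d : RT R fun r => (rhs r).length}
    (hd : d ∈ Mrec lhs rhs e n A) : lhs d.rootRule = A := by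
  obtain ⟨r, hr, ts, rfl, -⟩ := mrec_le_nodeSet n A hd
  exact hr

lemma wellSorted_of_mem_mrec {n : ℕ} {A : N} {d : RT R fun r => (rhs r).length}
    (hd : d ∈ Mrec lhs rhs e n A) : WellSorted lhs rhs d := by
  induction d generalizing A with
  | node r ts ih =>
    obtain ⟨r, -, ts, h, hts⟩ := mrec_le_nodeSet n A hd
    cases h
    exact .node r ts (fun i => lhs_rootRule_of_mem_mrec (hts i)) fun i => ih i (hts i)

lemma mem_mrec_of_subAt {n : ℕ} {A : N} {d t : RT R fun r => (rhs r).length} {p : List ℕ}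
    (hd : d ∈ Mrec lhs rhs e n A) (ht : RT.subAt d p = some t) :
    t ∈ Mrec lhs rhs e n (lhs t.rootRule) := by
  induction p generalizing d A with
  | nil =>
    cases Option.some_injective _ ((RT.subAt_nil d).symm.trans ht)
    rwa [lhs_rootRule_of_mem_mrec hd]
  | cons i p ih =>
    obtain ⟨r, -, ts, rfl, hts⟩ := mrec_le_nodeSet n A hd
    obtain ⟨hi, ht⟩ := RT.subAt_node_cons_eq_some ht
    exact ih (hts _) ht

lemma replaceAt_mem_mrec {n : ℕ} {A : N} {d t s : RT R fun r => (rhs r).length} {p : List ℕ}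
    (hd : d ∈ Mrec lhs rhs e n A) (ht : RT.subAt d p = some t)
    (hts : ∀ m B, t ∈ Mrec lhs rhs e m B → s ∈ Mrec lhs rhs e m B) :
    RT.replaceAt d p s ∈ Mrec lhs rhs e n A := by
  induction n generalizing A d p with
  | zero => exact absurd hd (Set.notMem_empty d)
  | succ n ih =>
    cases p with
    | nil =>
      cases Option.some_injective _ ((RT.subAt_nil d).symm.trans ht)
      simpa using hts _ _ hd
    | cons i p =>
      rw [mrec_succ] at hd ⊢
      split_ifs at hd ⊢
      · obtain ⟨r, hr, ts, rfl, hts'⟩ := hd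
        obtain ⟨hi, ht⟩ := RT.subAt_node_cons_eq_some ht
        refine ⟨r, hr, _, RT.replaceAt_cons_of_lt (ar := fun r => (rhs r).length) ts hi p s,
          fun j => ?_⟩
        rcases eq_or_ne j ⟨i, hi⟩ with rfl | hj
        · simpa using ih (hts' _) ht
        · simpa [Function.update_of_ne hj] using hts' j
      · exact ih hd ht

lemma height_lt_of_mem_mrec {n : ℕ} {A : N} {d : RT R fun r => (rhs r).length}
    (hd : d ∈ Mrec lhs rhs e n A) : d.height < n := by
  induction n generalizing A d with
  | zero => exact absurd hd (Set.notMem_empty d)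
  | succ n ih =>
    rw [mrec_succ] at hd
    split_ifs at hd
    · obtain ⟨r, -, ts, rfl, hts⟩ := hd
      exact Nat.lt_succ_of_le (Finset.sup_le fun i _ => ih (hts i))
    · exact Nat.lt_succ_of_lt (ih hd)

lemma finite_mrec [Finite R] (n : ℕ) (A : N) : (Mrec lhs rhs e n A).Finite :=
  (RT.finite_setOf_height_lt n).subset fun _ => height_lt_of_mem_mrec

lemma exists_select_eq (he : Function.Surjective e) (k : ℕ) (A : N) :
    ∃ m, Fintype.card N * k ≤ m ∧ m < Fintype.card N * (k + 1) ∧ select e m = A := by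
  obtain ⟨j, rfl⟩ := he A
  refine ⟨Fintype.card N * k + j, Nat.le_add_right _ _, by rw [Nat.mul_succ]; omega, ?_⟩
  simp only [select, Nat.mul_add_mod, Nat.mod_eq_of_lt j.2]

/-- Each block of `|N|` consecutive steps selects every nonterminal once. -/
lemma mem_mrec_of_height_lt (he : Function.Surjective e) {k : ℕ} {A : N}
    {d : RT R fun r => (rhs r).length} (hd : WellSorted lhs rhs d) (hA : lhs d.rootRule = A)
    (hk : d.height < k) : d ∈ Mrec lhs rhs e (Fintype.card N * k) A := by
  induction k generalizing A d with
  | zero => omega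
  | succ k ih =>
    obtain ⟨r, ts, hsort, hrec⟩ := hd
    obtain ⟨m, hkm, hmk, hsel⟩ := exists_select_eq he k A
    refine monotone_mrec hmk A ?_
    rw [mrec_succ, if_pos hsel]
    refine ⟨r, hA, ts, rfl, fun i => monotone_mrec hkm _ (ih (hrec i) (hsort i) ?_)⟩
    have := RT.height_lt_height_node (ar := fun r => (rhs r).length) ts i
    omega

end Derivations

section Cutouts

variable {R : Type}

lemma CutW.numNodes_lt {ar : R → ℕ} {w : List R} (hw : ElementaryCycle w) {x y : RT R ar}
    (h : CutW w x y) : y.numNodes < x.numNodes := by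
  obtain ⟨p, q, t, s, hp, hq, hseq, rfl⟩ := h
  have hq_ne : q ≠ [] := by
    rintro rfl
    have := RT.seqTo_length hseq
    have := hw.1
    simp_all
  exact RT.numNodes_replaceAt_lt hp (RT.numNodes_subAt_lt hq hq_ne)

lemma numNodes_lt_of_mem_cotreesW {ar : R → ℕ} {w : List R} (hw : ElementaryCycle w)
    {x y : RT R ar} (h : y ∈ cotreesW w x) : y.numNodes < x.numNodes := by
  induction h with
  | single h => exact h.numNodes_lt hw
  | tail _ h ih => exact (h.numNodes_lt hw).trans ih

lemma finite_cotreesW [Finite R] {ar : R → ℕ} {w : List R} (hw : ElementaryCycle w)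
    (x : RT R ar) : (cotreesW w x).Finite :=
  (RT.finite_setOf_numNodes_le x.numNodes).subset fun _ hy =>
    (numNodes_lt_of_mem_cotreesW hw hy).le

variable {N : Type} [Fintype N] [Nonempty N] {lhs : R → N} {rhs : R → List N}
  {e : Fin (Fintype.card N) → N}

/-- The cut subtree and its replacement have the same root rule, since `w` is a cycle. -/
lemma CutW.mem_mrec {w : List R} (hw : ElementaryCycle w) {x y : RT R fun r => (rhs r).length}
    (h : CutW w x y) {m : ℕ} {B : N} (hx : x ∈ Mrec lhs rhs e m B) :
    y ∈ Mrec lhs rhs e m B := by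
  obtain ⟨p, q, t, s, hp, hq, hseq, rfl⟩ := h
  have hroot : t.rootRule = s.rootRule := Option.some_injective _ <| by
    rw [← RT.seqTo_head? hseq, ← RT.seqTo_getLast? hq hseq, hw.2.1]
  refine replaceAt_mem_mrec hx hp fun m B ht => ?_
  rw [← lhs_rootRule_of_mem_mrec ht, hroot]
  exact mem_mrec_of_subAt ht hq

lemma mem_mrec_of_mem_cotreesW {w : List R} (hw : ElementaryCycle w)
    {x y : RT R fun r => (rhs r).length} (h : y ∈ cotreesW w x) {m : ℕ} {B : N}
    (hx : x ∈ Mrec lhs rhs e m B) : y ∈ Mrec lhs rhs e m B := by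
  induction h with
  | single h => exact h.mem_mrec hw hx
  | tail _ h ih => exact h.mem_mrec hw ih

end Cutouts

lemma exists_subAt_leafCW {R : Type} [Fintype R] {ar : R → ℕ} (c : ℕ) (d : RT R ar)
    (hd : cycleBound R c ≤ d.height) :
    ∃ p t q w, RT.subAt d p = some t ∧ LeafCW (c + 1) w t q := by
  obtain ⟨p, ⟨t₀, hsub, hleaf⟩, hlen⟩ := RT.exists_leafAt_length_eq_height d
  obtain ⟨ρ, hρ⟩ := RT.exists_seqTo_of_subAt hsub
  have hρlen := RT.seqTo_length hρ
  obtain ⟨w, j, hj, hcyc⟩ := exists_cwCyclic_drop c (ρ := ρ) (by omega)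
  rw [← List.take_append_drop j p] at hsub hρ
  rw [RT.subAt_append, Option.bind_eq_some_iff] at hsub
  obtain ⟨t, ht, ht₀⟩ := hsub
  have hseq := RT.seqTo_append ht hρ
  rw [List.length_take, min_eq_left (by omega)] at hseq
  exact ⟨_, t, _, w, ht, ⟨t₀, ht₀, hleaf⟩, _, hseq, hcyc⟩

section Weights

variable {K : Type} [AddCommMonoid K]

def DistributiveOps.multilinearMap {Ω : ∀ n : ℕ, Set ((Fin n → K) → K)}
    (hΩ : DistributiveOps Ω) {n : ℕ} {ω : (Fin n → K) → K} (hω : ω ∈ Ω n) :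
    MultilinearMap ℕ (fun _ : Fin n => K) K where
  toFun := ω
  map_update_add' := by
    intro _ x i a b
    obtain rfl : ‹DecidableEq (Fin n)› = instDecidableEqFin n := Subsingleton.elim _ _
    exact (hΩ n ω hω).1 x i a b
  map_update_smul' := by
    intro _ x i k a
    obtain rfl : ‹DecidableEq (Fin n)› = instDecidableEqFin n := Subsingleton.elim _ _
    induction k with
    | zero => simpa using (hΩ n ω hω).2 _ ⟨i, Function.update_self _ _ _⟩
    | succ k ih => rw [succ_nsmul, (hΩ n ω hω).1, ih, succ_nsmul]

variable {R : Type} {ar : R → ℕ} (F : ∀ r, MultilinearMap ℕ (fun _ : Fin (ar r) => K) K)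

lemma exists_addMonoidHom_wtval_replaceAt {d t : RT R ar} {p : List ℕ}
    (h : RT.subAt d p = some t) :
    ∃ L : K →+ K, ∀ s,
      wtval (fun r => F r) (RT.replaceAt d p s) = L (wtval (fun r => F r) s) := by
  induction p generalizing d with
  | nil => exact ⟨AddMonoidHom.id K, fun s => by simp⟩
  | cons i p ih =>
    cases d with
    | node r ts =>
      obtain ⟨hi, h⟩ := RT.subAt_node_cons_eq_some h
      obtain ⟨L, hL⟩ := ih h
      refine ⟨((F r).toLinearMap (fun j => wtval (fun r => F r) (ts j)) ⟨i, hi⟩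
        ).toAddMonoidHom.comp L, fun s => ?_⟩
      rw [RT.replaceAt_cons_of_lt ts hi, wtval, AddMonoidHom.comp_apply, ← hL]
      simp only [LinearMap.toAddMonoidHom_coe, MultilinearMap.toLinearMap_apply]
      congr 1
      funext j
      exact Function.apply_update (fun _ => wtval fun r => F r) ts _ _ j

end Weights

section ValueComputation

variable {K : Type} [AddCommMonoid K] {N R : Type} [Fintype N] [Nonempty N] [Fintype R]
  {lhs : R → N} {rhs : R → List N}
  (F : ∀ r, MultilinearMap ℕ (fun _ : Fin (rhs r).length => K) K)
  {e : Fin (Fintype.card N) → N}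

lemma vrec_eq_sum_mrec (n : ℕ) (A : N) :
    Vrec lhs rhs (fun r => F r) e n A =
      ∑ d ∈ (finite_mrec (lhs := lhs) (e := e) n A).toFinset, wtval (fun r => F r) d := by
  induction n generalizing A with
  | zero => simp [Vrec, Mrec]
  | succ n ih =>
    rw [Vrec]
    split_ifs with hsel
    · rw [← Finset.coe_filter_univ, finsum_mem_coe_finset]
      simp_rw [ih, MultilinearMap.map_sum_finset, Finset.sum_sigma']
      refine Finset.sum_bij (fun x _ => RT.node x.1 x.2) ?_ ?_ ?_ fun _ _ => rfl
      · rintro ⟨r, ts⟩ hx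
        simp only [Finset.mem_sigma, Finset.mem_filter_univ, Fintype.mem_piFinset,
          Set.Finite.mem_toFinset] at hx
        rw [Set.Finite.mem_toFinset, mrec_succ, if_pos hsel]
        exact ⟨r, hx.1, ts, rfl, hx.2⟩
      · rintro ⟨r, ts⟩ - ⟨r', ts'⟩ - h
        simp only [RT.node.injEq] at h
        obtain ⟨rfl, h⟩ := h
        rw [eq_of_heq h]
      · intro d hd
        rw [Set.Finite.mem_toFinset, mrec_succ, if_pos hsel] at hd
        obtain ⟨r, hr, ts, rfl, hts⟩ := hd
        exact ⟨⟨r, ts⟩, by simpa using ⟨hr, hts⟩, rfl⟩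
    · rw [ih]
      congr 1
      ext d
      simp [mrec_succ, hsel]

end ValueComputation

/-- The absorbed elements are removed one at a time, in order of decreasing measure. -/
lemma sum_eq_sum_filter_not_of_absorbed {ι M : Type*} [AddCommMonoid M] (f : ι → M)
    (P : ι → Prop) [DecidablePred P] (μ : ι → ℕ) (s : Finset ι)
    (h : ∀ b ∈ s, P b →
      ∃ G ⊆ s, (∀ g ∈ G, μ g < μ b) ∧ f b + ∑ g ∈ G, f g = ∑ g ∈ G, f g) :
    ∑ x ∈ s, f x = ∑ x ∈ s.filter (¬ P ·), f x := by
  induction s using Finset.strongInduction with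
  | H s ih =>
    by_cases hP : ∃ b ∈ s, P b
    · obtain ⟨b, hb, hmax⟩ := Finset.exists_max_image (s.filter P) μ
        (by simpa [Finset.filter_nonempty_iff] using hP)
      rw [Finset.mem_filter] at hb
      have hsmall : ∀ {b'}, μ b' ≤ μ b →
          ∀ G ⊆ s, (∀ g ∈ G, μ g < μ b') → G ⊆ s.erase b :=
        fun hb' G hG hGμ g hg => Finset.mem_erase.mpr
          ⟨fun hgb => by have := hGμ g hg; rw [hgb] at this; omega, hG hg⟩
      obtain ⟨G, hGs, hGμ, hbG⟩ := h b hb.1 hb.2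
      have hG := hsmall le_rfl G hGs hGμ
      calc ∑ x ∈ s, f x = f b + ∑ x ∈ s.erase b, f x := (Finset.add_sum_erase s f hb.1).symm
        _ = ∑ x ∈ s.erase b, f x := by
          rw [← Finset.sum_sdiff hG, add_left_comm, hbG]
        _ = ∑ x ∈ (s.erase b).filter (¬ P ·), f x := by
          refine ih _ (Finset.erase_ssubset hb.1) fun b' hb' hPb' => ?_
          obtain ⟨G', hG's, hG'μ, hb'G'⟩ := h b' (Finset.mem_of_mem_erase hb') hPb'
          have hb'b := hmax b' (Finset.mem_filter.mpr ⟨Finset.mem_of_mem_erase hb', hPb'⟩)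
          exact ⟨G', hsmall hb'b G' hG's hG'μ, hG'μ, hb'G'⟩
        _ = ∑ x ∈ s.filter (¬ P ·), f x := by
          rw [Finset.filter_erase, Finset.erase_eq_of_notMem (by simp [hb.2])]
    · rw [Finset.filter_true_of_mem (p := (¬ P ·)) fun x hx hPx => hP ⟨x, hx, hPx⟩]

section Termination

variable {K : Type} [AddCommMonoid K] {N R : Type} [Fintype N] [Nonempty N] [Fintype R]
  {lhs : R → N} {rhs : R → List N}
  (F : ∀ r, MultilinearMap ℕ (fun _ : Fin (rhs r).length => K) K)
  {e : Fin (Fintype.card N) → N} {c : ℕ}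

/-- The weight of `d` depends additively on its subtree at a position, so the absorption given
by `c`-closedness at a subtree with a `(c + 1, w)`-cyclic leaf lifts to `d`. -/
lemma exists_absorbing_subset_mrec (hclosed : CClosed lhs rhs (fun r => F r) c) {n : ℕ} {A : N}
    {d : RT R fun r => (rhs r).length} (hd : d ∈ Mrec lhs rhs e n A)
    (hh : cycleBound R c ≤ d.height) :
    ∃ G ⊆ (finite_mrec (lhs := lhs) (e := e) n A).toFinset,
      (∀ g ∈ G, g.numNodes < d.numNodes) ∧
      wtval (fun r => F r) d + ∑ g ∈ G, wtval (fun r => F r) g =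
        ∑ g ∈ G, wtval (fun r => F r) g := by
  obtain ⟨p, t, q, w, ht, hleaf⟩ := exists_subAt_leafCW c d hh
  have hw : ElementaryCycle w := by
    obtain ⟨-, -, -, hw, -⟩ := hleaf
    exact hw
  have hfin := finite_cotreesW hw t
  have habs := hclosed t (wellSorted_of_mem_mrec (mem_mrec_of_subAt hd ht)) w hw ⟨q, hleaf⟩
  rw [finsum_mem_eq_finite_toFinset_sum _ hfin] at habs
  obtain ⟨L, hL⟩ := exists_addMonoidHom_wtval_replaceAt F ht
  have hdL : wtval (fun r => F r) d = L (wtval (fun r => F r) t) := by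
    rw [← hL, RT.replaceAt_self ht]
  refine ⟨hfin.toFinset.image (RT.replaceAt d p), fun g hg => ?_, fun g hg => ?_, ?_⟩
  · obtain ⟨x, hx, rfl⟩ := Finset.mem_image.mp hg
    rw [Set.Finite.mem_toFinset] at hx ⊢
    exact replaceAt_mem_mrec hd ht fun m B => mem_mrec_of_mem_cotreesW hw hx
  · obtain ⟨x, hx, rfl⟩ := Finset.mem_image.mp hg
    rw [Set.Finite.mem_toFinset] at hx
    exact RT.numNodes_replaceAt_lt ht (numNodes_lt_of_mem_cotreesW hw hx)
  · rw [Finset.sum_image fun x _ y _ hxy => RT.replaceAt_injective ht hxy]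
    simp only [hL, hdL, ← map_sum, ← map_add, habs]

lemma vrec_eq_sum_height_lt (hclosed : CClosed lhs rhs (fun r => F r) c)
    (he : Function.Surjective e) {n : ℕ} (hn : Fintype.card N * cycleBound R c ≤ n) (A : N) :
    Vrec lhs rhs (fun r => F r) e n A =
      ∑ d ∈ ((RT.finite_setOf_height_lt (cycleBound R c)).inter_of_right
        (TRA lhs rhs A)).toFinset, wtval (fun r => F r) d := by
  rw [vrec_eq_sum_mrec, sum_eq_sum_filter_not_of_absorbed _ (cycleBound R c ≤ RT.height ·) _ _
    fun d hd hh => exists_absorbing_subset_mrec F hclosed ((Set.Finite.mem_toFinset _).mp hd) hh]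
  congr 1
  ext d
  simp only [Finset.mem_filter, Set.Finite.mem_toFinset, not_le, Set.mem_inter_iff, TRA,
    Set.mem_ofPred_eq]
  exact ⟨fun ⟨hd, hh⟩ =>
      ⟨⟨wellSorted_of_mem_mrec hd, lhs_rootRule_of_mem_mrec hd⟩, hh⟩,
    fun ⟨⟨hws, hA⟩, hh⟩ =>
      ⟨monotone_mrec hn A (mem_mrec_of_height_lt he hws hA hh), hh⟩⟩

end Termination

theorem value_computation_terminates_general {N R K : Type} [Fintype N] [Nonempty N] [Fintype R]
    [AddCommMonoid K]
    (Ω : ∀ n : ℕ, Set ((Fin n → K) → K)) (hΩd : DistributiveOps Ω)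
    (lhs : R → N) (rhs : R → List N)
    (wt : ∀ r : R, (Fin (rhs r).length → K) → K) (hwt : ∀ r : R, wt r ∈ Ω (rhs r).length)
    (c : ℕ) (hclosed : CClosed lhs rhs wt c)
    (e : Fin (Fintype.card N) → N) (he : Function.Bijective e) :
    ∃ n₀ : ℕ, ∀ n, n₀ ≤ n → ∀ A : N, Vrec lhs rhs wt e n A = Vrec lhs rhs wt e n₀ A := by
  obtain ⟨F, rfl⟩ : ∃ F : ∀ r, MultilinearMap ℕ (fun _ : Fin (rhs r).length => K) K,
      (fun r => ⇑(F r)) = wt :=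
    ⟨fun r => hΩd.multilinearMap (hwt r), rfl⟩
  refine ⟨Fintype.card N * cycleBound R c, fun n hn A => ?_⟩
  rw [vrec_eq_sum_height_lt F hclosed he.surjective hn,
    vrec_eq_sum_height_lt F hclosed he.surjective le_rfl]

/-- Termination of the value computation algorithm: for every `c`-closed weighted system,
the value computation recursion stabilizes. -/
theorem value_computation_terminates {N R K : Type} [Fintype N] [Nonempty N] [Fintype R]
    [AddCommMonoid K]
    (S : InfSum K) (hdc : S.DComplete)
    (Ω : ∀ n : ℕ, Set ((Fin n → K) → K)) (hΩ0 : HasZeroOps Ω) (hΩd : DistributiveOps Ω)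
    (lhs : R → N) (rhs : R → List N)
    (wt : ∀ r : R, (Fin (rhs r).length → K) → K) (hwt : ∀ r : R, wt r ∈ Ω (rhs r).length)
    (c : ℕ) (hclosed : CClosed lhs rhs wt c)
    (e : Fin (Fintype.card N) → N) (he : Function.Bijective e) :
    ∃ n₀ : ℕ, ∀ n, n₀ ≤ n → ∀ A : N, Vrec lhs rhs wt e n A = Vrec lhs rhs wt e n₀ A :=
  value_computation_terminates_general Ω hΩd lhs rhs wt hwt c hclosed e he
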